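/- arXiv:math/0605303 — 3 statements merged into one kernel-verified Lean document; each statement's English description precedes it below -/
import Mathlib

section
/- Let Γ' be a group acting on a set S, let Γ be a subgroup of Γ' of finite index n = [Γ' : Γ], and let s ∈ S be a point whose stabilizer Γ'_s in Γ' is finite. Then every point of the Γ'-orbit of s has finite stabilizer in Γ, the Γ'-orbit of s decomposes into finitely many Γ-orbits, and, choosing one representative x_O in each Γ-orbit O contained in Γ'·s, one has Σ_O |Γ'_s| / |Γ_{x_O}| = n as rational numbers (the summand is independent of the chosen representative, since stabilizers of points in the same orbit are conjugate). -/
open MulAction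

private lemma aux_card {Γ' S : Type*} [Group Γ'] [MulAction Γ' S] (Γ : Subgroup Γ') (s : S) (a : Γ') :
    Nat.card (MulAction.stabilizer (MulAction.stabilizer Γ' s) ((a⁻¹ : Γ') : Γ' ⧸ Γ)) =
    Nat.card (MulAction.stabilizer Γ (a • s)) := by
  apply Nat.card_congr
  refine ⟨fun h => ⟨⟨a * h.1.1 * a⁻¹, ?_⟩, ?_⟩, fun γ => ⟨⟨a⁻¹ * γ.1.1 * a, ?_⟩, ?_⟩,
    fun h => ?_, fun γ => ?_⟩
  · have h2 : ((h.1.1 : Γ') • ((a⁻¹ : Γ') : Γ' ⧸ Γ) : Γ' ⧸ Γ)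
        = ((a⁻¹ : Γ') : Γ' ⧸ Γ) := h.2
    rw [MulAction.Quotient.smul_coe, QuotientGroup.eq] at h2
    simp only [smul_eq_mul, mul_inv_rev, inv_inv] at h2
    simpa [mul_assoc] using Γ.inv_mem h2
  · have h1 : (h.1.1 : Γ') • s = s := h.1.2
    rw [MulAction.mem_stabilizer_iff]
    show ((a * h.1.1 * a⁻¹ : Γ')) • (a • s) = a • s
    rw [mul_smul, mul_smul, inv_smul_smul, h1]
  · have h1 : (γ.1.1 : Γ') • (a • s) = a • s := γ.2
    rw [MulAction.mem_stabilizer_iff]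
    rw [mul_smul, mul_smul, h1, inv_smul_smul]
  · rw [MulAction.mem_stabilizer_iff]
    show ((a⁻¹ * γ.1.1 * a : Γ')) • ((a⁻¹ : Γ') : Γ' ⧸ Γ) = ((a⁻¹ : Γ') : Γ' ⧸ Γ)
    rw [MulAction.Quotient.smul_coe, QuotientGroup.eq]
    simp only [smul_eq_mul, mul_inv_rev, inv_inv]
    convert Γ.inv_mem γ.1.2 using 1
    group
  · ext; show a⁻¹ * (a * h.1.1 * a⁻¹) * a = h.1.1; group
  · ext; show a * (a⁻¹ * γ.1.1 * a) * a⁻¹ = γ.1.1; group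

-- the set equality
private lemma aux_orbit {Γ' S : Type*} [Group Γ'] [MulAction Γ' S] (Γ : Subgroup Γ') (s : S) (a : Γ') :
    {c : Γ' ⧸ Γ | a • s ∈ MulAction.orbit Γ ((Quotient.out c)⁻¹ • s)}
      = MulAction.orbit (MulAction.stabilizer Γ' s) ((a⁻¹ : Γ') : Γ' ⧸ Γ) := by
  have cond_mk : ∀ g : Γ', a • s ∈ MulAction.orbit Γ ((Quotient.out (g : Γ' ⧸ Γ))⁻¹ • s)
      ↔ a • s ∈ MulAction.orbit Γ (g⁻¹ • s) := by
    intro g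
    obtain ⟨γ, hγ⟩ := QuotientGroup.mk_out_eq_mul Γ g
    rw [hγ]
    have : ((g * γ)⁻¹ : Γ') • s = (γ⁻¹ : Γ) • (g⁻¹ • s) := by
      show _ = (γ⁻¹ : Γ') • (g⁻¹ • s)
      rw [mul_inv_rev, mul_smul]
    rw [this, MulAction.orbit_smul]
  ext c
  induction c using QuotientGroup.induction_on with
  | H g =>
    simp only [Set.mem_setOf_eq, cond_mk g]
    constructor
    · rintro ⟨⟨γ, hγ⟩, hγx⟩
      have hγx' : (γ : Γ') • (g⁻¹ • s) = a • s := hγx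
      have hh : (g * γ⁻¹ * a) • s = s := by
        rw [mul_smul, mul_smul, ← hγx', inv_smul_smul, smul_inv_smul]
      refine ⟨⟨g * γ⁻¹ * a, hh⟩, ?_⟩
      show ((g * γ⁻¹ * a : Γ')) • ((a⁻¹ : Γ') : Γ' ⧸ Γ) = (g : Γ' ⧸ Γ)
      rw [MulAction.Quotient.smul_coe, QuotientGroup.eq]
      simp only [smul_eq_mul]
      convert hγ using 1
      group
    · rintro ⟨⟨h, hh⟩, he⟩
      have he' : ((h : Γ') • ((a⁻¹ : Γ') : Γ' ⧸ Γ) : Γ' ⧸ Γ) = (g : Γ' ⧸ Γ) := he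
      rw [MulAction.Quotient.smul_coe, QuotientGroup.eq] at he'
      simp only [smul_eq_mul, mul_inv_rev, inv_inv] at he'
      refine ⟨⟨a * h⁻¹ * g, by simpa [mul_assoc] using he'⟩, ?_⟩
      show ((a * h⁻¹ * g : Γ')) • (g⁻¹ • s) = a • s
      rw [← mul_smul]
      have hinv : (h⁻¹ : Γ') • s = s := by
        rw [inv_smul_eq_iff, hh]
      calc (a * h⁻¹ * g * g⁻¹) • s = (a * h⁻¹) • s := by congr 1; group
        _ = a • s := by rw [mul_smul, hinv]

/-- Let `Γ'` act on `S`, let `Γ ≤ Γ'` have finite index `n`, and let `s ∈ S`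
have finite stabilizer in `Γ'`.  Then every point of the `Γ'`-orbit of `s` has finite stabilizer
in `Γ`, the `Γ'`-orbit of `s` decomposes into finitely many `Γ`-orbits (i.e. there is a finite
set of representatives, one in each `Γ`-orbit contained in `Γ'·s`), and for every such set `R`
of representatives, `Σ_{x ∈ R} |Γ'_s| / |Γ_x| = n` in `ℚ`. -/
theorem orbit_decomposition_count
    {Γ' S : Type*} [Group Γ'] [MulAction Γ' S] (Γ : Subgroup Γ')
    (n : ℕ) (hn : Γ.index = n) (hn0 : n ≠ 0) (s : S)
    (hfin : Finite (MulAction.stabilizer Γ' s)) :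
    (∀ x ∈ MulAction.orbit Γ' s, Finite (MulAction.stabilizer Γ x)) ∧
    (∃ R : Finset S, (∀ x ∈ R, x ∈ MulAction.orbit Γ' s) ∧
        ∀ y ∈ MulAction.orbit Γ' s, ∃! x, x ∈ R ∧ x ∈ MulAction.orbit Γ y) ∧
    (∀ R : Finset S, (∀ x ∈ R, x ∈ MulAction.orbit Γ' s) →
        (∀ y ∈ MulAction.orbit Γ' s, ∃! x, x ∈ R ∧ x ∈ MulAction.orbit Γ y) →
        ∑ x ∈ R, (Nat.card (MulAction.stabilizer Γ' s) : ℚ) /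
            (Nat.card (MulAction.stabilizer Γ x) : ℚ) = (n : ℚ)) := by
  classical
  have hcardQ : Nat.card (Γ' ⧸ Γ) = n := hn
  have hfinQ : Finite (Γ' ⧸ Γ) := (Nat.card_ne_zero.mp (by rw [hcardQ]; exact hn0)).2
  have hFT : Fintype (Γ' ⧸ Γ) := Fintype.ofFinite _
  have part1 : ∀ x ∈ MulAction.orbit Γ' s, Finite (MulAction.stabilizer Γ x) := by
    rintro x ⟨g, rfl⟩
    have h1 : Finite (MulAction.stabilizer Γ' (g • s)) := by
      rw [MulAction.stabilizer_smul_eq_stabilizer_map_conj]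
      exact Finite.of_equiv _
        (Subgroup.equivMapOfInjective _ _ (MulAut.conj g).injective).toEquiv
    exact Finite.of_injective
      (fun γ : MulAction.stabilizer Γ (g • s) =>
        (⟨γ.1.1, γ.2⟩ : MulAction.stabilizer Γ' (g • s)))
      (fun a b hab => by
        apply Subtype.ext; apply Subtype.ext
        exact congrArg (fun t => t.1) hab)
  refine ⟨part1, ?_, ?_⟩
  · -- existence of R
    set sd := MulAction.orbitRel Γ S with hsd
    let rep : Γ' ⧸ Γ → S := fun c => (Quotient.mk sd ((Quotient.out c)⁻¹ • s)).out
    have hrepmk : ∀ c, Quotient.mk sd (rep c) = Quotient.mk sd ((Quotient.out c)⁻¹ • s) :=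
      fun c => Quotient.out_eq _
    have hrep : ∀ c : Γ' ⧸ Γ, rep c ∈ MulAction.orbit Γ ((Quotient.out c)⁻¹ • s) :=
      fun c => MulAction.orbitRel_apply.mp (Quotient.exact (hrepmk c))
    have huniq : ∀ c₁ c₂ : Γ' ⧸ Γ, rep c₁ ∈ MulAction.orbit Γ (rep c₂) → rep c₁ = rep c₂ := by
      intro c₁ c₂ h
      have : Quotient.mk sd (rep c₁) = Quotient.mk sd (rep c₂) :=
        Quotient.sound (MulAction.orbitRel_apply.mpr h)
      calc rep c₁ = (Quotient.mk sd (rep c₁)).out := (Quotient.out_eq _).symm ▸ rfl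
        _ = (Quotient.mk sd (rep c₂)).out := by rw [this]
        _ = rep c₂ := by rw [Quotient.out_eq]
    refine ⟨Finset.image rep Finset.univ, ?_, ?_⟩
    · intro x hx
      obtain ⟨c, -, rfl⟩ := Finset.mem_image.mp hx
      obtain ⟨γ, hγ⟩ := hrep c
      refine ⟨(γ : Γ') * (Quotient.out c)⁻¹, ?_⟩
      show ((γ : Γ') * (Quotient.out c)⁻¹) • s = rep c
      rw [mul_smul]; exact hγ
    · rintro y ⟨g, rfl⟩
      have hmemorb : rep ((g⁻¹ : Γ') : Γ' ⧸ Γ) ∈ MulAction.orbit Γ (g • s) := by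
        obtain ⟨γ, hγ⟩ := QuotientGroup.mk_out_eq_mul Γ g⁻¹
        have : ((Quotient.out ((g⁻¹ : Γ') : Γ' ⧸ Γ))⁻¹ • s) = (γ⁻¹ : Γ) • (g • s) := by
          rw [hγ]
          show _ = ((γ : Γ')⁻¹) • (g • s)
          rw [mul_inv_rev, inv_inv, mul_smul]
        have h2 := hrep ((g⁻¹ : Γ') : Γ' ⧸ Γ)
        rw [this, MulAction.orbit_smul] at h2
        exact h2
      refine ⟨rep ((g⁻¹ : Γ') : Γ' ⧸ Γ),
        ⟨Finset.mem_image.mpr ⟨_, Finset.mem_univ _, rfl⟩, hmemorb⟩, ?_⟩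
      rintro x' ⟨hx'R, hx'orb⟩
      obtain ⟨c', -, rfl⟩ := Finset.mem_image.mp hx'R
      apply huniq
      rw [MulAction.orbit_eq_iff.mpr hmemorb]
      exact hx'orb
  · -- the counting formula
    intro R hR1 hR2
    set F : Γ' ⧸ Γ → S := fun c =>
      (hR2 ((Quotient.out c)⁻¹ • s) ⟨(Quotient.out c)⁻¹, rfl⟩).choose with hF
    have hFspec : ∀ c, (F c ∈ R ∧ F c ∈ MulAction.orbit Γ ((Quotient.out c)⁻¹ • s)) :=
      fun c => (hR2 ((Quotient.out c)⁻¹ • s) ⟨(Quotient.out c)⁻¹, rfl⟩).choose_spec.1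
    have hFuniq : ∀ c x, x ∈ R → x ∈ MulAction.orbit Γ ((Quotient.out c)⁻¹ • s) → x = F c :=
      fun c x hx h =>
        (hR2 ((Quotient.out c)⁻¹ • s) ⟨(Quotient.out c)⁻¹, rfl⟩).choose_spec.2 x ⟨hx, h⟩
    have hfiber : ∀ x ∈ R, ∀ c, (F c = x ↔ x ∈ MulAction.orbit Γ ((Quotient.out c)⁻¹ • s)) := by
      intro x hx c
      constructor
      · rintro rfl; exact (hFspec c).2
      · intro h; exact (hFuniq c x hx h).symm
    -- per-point fiber cardinality
    have key : ∀ x ∈ R, ((Finset.univ.filter fun c => F c = x).card : ℚ)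
        = (Nat.card (MulAction.stabilizer Γ' s) : ℚ) /
          (Nat.card (MulAction.stabilizer Γ x) : ℚ) := by
      intro x hx
      obtain ⟨a, rfl⟩ := hR1 x hx
      have hcard1 : (Finset.univ.filter fun c => F c = a • s).card
          = Nat.card {c : Γ' ⧸ Γ // F c = a • s} := by
        rw [Nat.card_eq_fintype_card, Fintype.card_subtype]
      have hcard2 : Nat.card {c : Γ' ⧸ Γ // F c = a • s}
          = Nat.card {c : Γ' ⧸ Γ // a • s ∈ MulAction.orbit Γ ((Quotient.out c)⁻¹ • s)} :=
        Nat.card_congr (Equiv.subtypeEquivRight (fun c => hfiber _ hx c))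
      have hcard3 : Nat.card {c : Γ' ⧸ Γ // a • s ∈ MulAction.orbit Γ ((Quotient.out c)⁻¹ • s)}
          = Nat.card (MulAction.orbit (MulAction.stabilizer Γ' s) ((a⁻¹ : Γ') : Γ' ⧸ Γ)) :=
        Nat.card_congr (Equiv.setCongr (aux_orbit Γ s a))
      -- orbit stabilizer
      letI : Fintype (MulAction.stabilizer Γ' s) := Fintype.ofFinite _
      letI : Fintype (MulAction.orbit (MulAction.stabilizer Γ' s) ((a⁻¹ : Γ') : Γ' ⧸ Γ)) :=
        Fintype.ofFinite _
      letI : Fintype (MulAction.stabilizer (MulAction.stabilizer Γ' s) ((a⁻¹ : Γ') : Γ' ⧸ Γ)) :=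
        Fintype.ofFinite _
      have hOS := MulAction.card_orbit_mul_card_stabilizer_eq_card_group
        (MulAction.stabilizer Γ' s) ((a⁻¹ : Γ') : Γ' ⧸ Γ)
      rw [← Nat.card_eq_fintype_card, ← Nat.card_eq_fintype_card, ← Nat.card_eq_fintype_card,
        aux_card Γ s a] at hOS
      have hne : (Nat.card (MulAction.stabilizer Γ (a • s)) : ℚ) ≠ 0 := by
        haveI := part1 (a • s) ⟨a, rfl⟩
        exact_mod_cast Nat.card_pos.ne'
      rw [eq_div_iff hne]
      rw [hcard1, hcard2, hcard3]
      exact_mod_cast hOS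
    calc ∑ x ∈ R, (Nat.card (MulAction.stabilizer Γ' s) : ℚ) /
            (Nat.card (MulAction.stabilizer Γ x) : ℚ)
        = ∑ x ∈ R, ((Finset.univ.filter fun c => F c = x).card : ℚ) := by
          refine Finset.sum_congr rfl fun x hx => (key x hx).symm
      _ = ((∑ x ∈ R, (Finset.univ.filter fun c => F c = x).card : ℕ) : ℚ) := by push_cast; ring
      _ = ((Finset.univ : Finset (Γ' ⧸ Γ)).card : ℚ) := by
          rw [← Finset.card_eq_sum_card_fiberwise (fun c _ => (hFspec c).1)]
      _ = (n : ℚ) := by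
          rw [← hcardQ, Nat.card_eq_fintype_card, Finset.card_univ]
end

section
/- Let Γ' be a group acting on a set S with only finitely many Γ'-orbits and with all stabilizers Γ'_s finite, and let Γ be a subgroup of Γ' of finite index n = [Γ' : Γ]. Then the Γ-action on S has only finitely many orbits and all Γ-stabilizers are finite, and the covolumes satisfy Vol(Γ\\S) = n · Vol(Γ'\\S), where Vol(Δ\\S) = Σ_{s ∈ Δ\S} 1/|Δ_s| (the sum, in ℚ, over a set of representatives of the Δ-orbits, of the reciprocals of the stabilizer orders; this is well defined since stabilizers of points in the same orbit are conjugate). In particular an overgroup of index n corresponds to an n-sheeted covering, as in the paper's Corollary 21. -/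
/-!
Fix a `Γ'`-orbit `Γ' • s` and put `H = Γ'_s`. The `Γ`-orbits in `Γ' • s` correspond to the
double cosets `Γ \ Γ' / H`, i.e. to the `H`-orbits on the finite set `Γ' ⧸ Γ`, via
`Γ • g⁻¹ s ↔ H • gΓ`, and conjugation by `g` identifies `Γ_{g⁻¹ s}` with `H_{gΓ}`. By
orbit-stabilizer, `1 / |Γ_{g⁻¹ s}| = |H • gΓ| / |H|`, and the `H`-orbits partition `Γ' ⧸ Γ`,
so the `Γ`-orbits in `Γ' • s` contribute `[Γ' : Γ] / |Γ'_s|` to `Vol(Γ\S)`.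
-/

open MulAction

namespace MulAction

variable {G X : Type*} [Group G] [MulAction G X]

theorem sum_eq_sum_sum_filter_mem_orbit {M : Type*} [AddCommMonoid M]
    [∀ x' : X, DecidablePred (· ∈ orbit G x')] (R R' : Finset X)
    (hR' : ∀ y, ∃! x, x ∈ R' ∧ x ∈ orbit G y) (f : X → M) :
    ∑ x ∈ R, f x = ∑ x' ∈ R', ∑ x ∈ R with x ∈ orbit G x', f x := by
  simp_rw [Finset.sum_filter]
  rw [Finset.sum_comm]
  refine Finset.sum_congr rfl fun x _ ↦ ?_
  obtain ⟨x', ⟨hx'R', hx'⟩, huniq⟩ := hR' x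
  rw [Finset.sum_eq_single_of_mem x' hx'R', if_pos (mem_orbit_symm.1 hx')]
  intro b hb hbx'
  exact if_neg fun hxb ↦ hbx' (huniq b ⟨hb, mem_orbit_symm.1 hxb⟩)

theorem sum_card_orbit_eq_card [Finite X] [Fintype (orbitRel.Quotient G X)] :
    ∑ ω : orbitRel.Quotient G X, Nat.card ω.orbit = Nat.card X := by
  have := Fintype.ofFinite X
  rw [Nat.card_congr (selfEquivSigmaOrbits' G X), Nat.card_sigma]

theorem inv_card_stabilizer_eq_card_orbit_div [Finite G] (x : X) :
    (Nat.card (stabilizer G x) : ℚ)⁻¹ = Nat.card (orbit G x) / Nat.card G := by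
  have : Finite (orbit G x) := Set.finite_range (· • x)
  have : Nonempty (orbit G x) := ⟨⟨x, mem_orbit_self x⟩⟩
  rw [← Subgroup.index_mul_card (stabilizer G x), index_stabilizer, ← Nat.card_coe_set_eq]
  have : (Nat.card (stabilizer G x) : ℚ) ≠ 0 := Nat.cast_ne_zero.2 Nat.card_pos.ne'
  have : (Nat.card (orbit G x) : ℚ) ≠ 0 := Nat.cast_ne_zero.2 Nat.card_pos.ne'
  push_cast
  field_simp

end MulAction

section DoubleCoset

variable {Γ' S : Type*} [Group Γ'] [MulAction Γ' S] (Γ : Subgroup Γ') (s : S)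

theorem coset_mem_orbit_stabilizer_iff (g₁ g₂ : Γ') :
    (g₁ : Γ' ⧸ Γ) ∈ orbit (stabilizer Γ' s) (g₂ : Γ' ⧸ Γ) ↔ g₁⁻¹ • s ∈ orbit Γ (g₂⁻¹ • s) := by
  simp only [mem_orbit_iff, Subtype.exists, Subgroup.smul_def, mem_stabilizer_iff]
  constructor
  · rintro ⟨h, hs, hh⟩
    change ((h * g₂ : Γ') : Γ' ⧸ Γ) = g₁ at hh
    rw [QuotientGroup.eq] at hh
    refine ⟨_, Γ.inv_mem hh, ?_⟩
    rw [smul_smul, mul_inv_rev, inv_inv, mul_assoc, mul_inv_cancel_right, mul_smul, hs]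
  · rintro ⟨γ, hγ, hγs⟩
    refine ⟨g₁ * γ * g₂⁻¹, ?_, ?_⟩
    · rw [mul_smul, mul_smul, hγs, smul_inv_smul]
    · change ((g₁ * γ * g₂⁻¹ * g₂ : Γ') : Γ' ⧸ Γ) = g₁
      rw [inv_mul_cancel_right, QuotientGroup.eq]
      simpa using Γ.inv_mem hγ

def stabilizerInvSmulEquiv (g : Γ') :
    stabilizer Γ (g⁻¹ • s) ≃ stabilizer (stabilizer Γ' s) (g : Γ' ⧸ Γ) where
  toFun γ := ⟨⟨g * γ * g⁻¹, by
      have hγ : (γ : Γ') • g⁻¹ • s = g⁻¹ • s := γ.2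
      rw [mem_stabilizer_iff, mul_smul, mul_smul, hγ, smul_inv_smul]⟩, by
      change ((g * γ * g⁻¹ * g : Γ') : Γ' ⧸ Γ) = g
      rw [inv_mul_cancel_right, QuotientGroup.eq]
      simp⟩
  invFun h := ⟨⟨g⁻¹ * h * g, by
      have hh : ((h * g : Γ') : Γ' ⧸ Γ) = g := h.2
      rw [QuotientGroup.eq] at hh
      simpa [mul_assoc] using Γ.inv_mem hh⟩, by
      have hs : (h : Γ') • s = s := h.1.2
      change (g⁻¹ * h * g) • g⁻¹ • s = g⁻¹ • s
      rw [mul_smul, smul_inv_smul, mul_smul, hs]⟩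
  left_inv γ := by ext; simp [mul_assoc]
  right_inv h := by ext; simp [mul_assoc]

theorem sum_filter_mem_orbit_inv_card_stabilizer [Finite (Γ' ⧸ Γ)] [Finite (stabilizer Γ' s)]
    [DecidablePred (· ∈ orbit Γ' s)] (R : Finset S) (hR : ∀ y, ∃! x, x ∈ R ∧ x ∈ orbit Γ y) :
    ∑ x ∈ R with x ∈ orbit Γ' s, (Nat.card (stabilizer Γ x) : ℚ)⁻¹ =
      Γ.index / Nat.card (stabilizer Γ' s) := by
  have := Fintype.ofFinite (orbitRel.Quotient (stabilizer Γ' s) (Γ' ⧸ Γ))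
  have hg : ∀ x ∈ orbit Γ' s, ∃ g : Γ', g⁻¹ • s = x := fun x ⟨k, hk⟩ ↦ ⟨k⁻¹, by rwa [inv_inv]⟩
  choose! g hg using hg
  calc ∑ x ∈ R with x ∈ orbit Γ' s, (Nat.card (stabilizer Γ x) : ℚ)⁻¹
      = ∑ x ∈ R with x ∈ orbit Γ' s,
          (Nat.card (orbit (stabilizer Γ' s) (g x : Γ' ⧸ Γ)) : ℚ) / Nat.card (stabilizer Γ' s) := by
        refine Finset.sum_congr rfl fun x hx ↦ ?_
        rw [← inv_card_stabilizer_eq_card_orbit_div, ← Nat.card_congr (stabilizerInvSmulEquiv Γ s _),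
          hg x (Finset.mem_filter.1 hx).2]
    _ = ∑ ω : orbitRel.Quotient (stabilizer Γ' s) (Γ' ⧸ Γ),
          (Nat.card ω.orbit : ℚ) / Nat.card (stabilizer Γ' s) := by
        refine Finset.sum_bij (fun x _ ↦ ⟦(g x : Γ' ⧸ Γ)⟧) (fun _ _ ↦ Finset.mem_univ _) ?_ ?_
          (fun _ _ ↦ rfl)
        · intro a ha b hb hab
          rw [Finset.mem_filter] at ha hb
          have hab : a ∈ orbit Γ b := by
            rw [← hg a ha.2, ← hg b hb.2, ← coset_mem_orbit_stabilizer_iff]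
            exact Quotient.eq.1 hab
          exact (hR b).unique ⟨ha.1, hab⟩ ⟨hb.1, mem_orbit_self b⟩
        · rintro ω -
          obtain ⟨k, rfl⟩ : ∃ k : Γ', ⟦(k : Γ' ⧸ Γ)⟧ = ω := by
            obtain ⟨⟨k⟩, rfl⟩ := Quotient.exists_rep ω
            exact ⟨k, rfl⟩
          obtain ⟨x, ⟨hxR, hxk⟩, -⟩ := hR (k⁻¹ • s)
          have hxs : x ∈ orbit Γ' s := orbit_smul k⁻¹ s ▸ orbit_subgroup_subset Γ _ hxk
          refine ⟨x, Finset.mem_filter.2 ⟨hxR, hxs⟩, Quotient.eq.2 ?_⟩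
          rw [orbitRel_apply, coset_mem_orbit_stabilizer_iff, hg x hxs]
          exact hxk
    _ = Γ.index / Nat.card (stabilizer Γ' s) := by
        rw [← Finset.sum_div, ← Nat.cast_sum, sum_card_orbit_eq_card, Subgroup.index_eq_card]

end DoubleCoset

/-- Let `Γ'` act on `S` with finitely many orbits and finite stabilizers, and
let `Γ ≤ Γ'` have finite index `n`.  Then the `Γ`-action has finitely many orbits and finite
stabilizers, and for any sets `R`, `R'` of representatives of the `Γ`-orbits resp. `Γ'`-orbits,
`Vol(Γ\S) = Σ_{x ∈ R} 1/|Γ_x|` equals `n · Vol(Γ'\S) = n · Σ_{x ∈ R'} 1/|Γ'_x|` in `ℚ`. -/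
theorem covolume_of_finite_index_subgroup
    {Γ' S : Type*} [Group Γ'] [MulAction Γ' S]
    (horb : Finite (MulAction.orbitRel.Quotient Γ' S))
    (hstab : ∀ s : S, Finite (MulAction.stabilizer Γ' s))
    (Γ : Subgroup Γ') (n : ℕ) (hn : Γ.index = n) (hn0 : n ≠ 0) :
    Finite (MulAction.orbitRel.Quotient Γ S) ∧
    (∀ s : S, Finite (MulAction.stabilizer Γ s)) ∧
    (∀ R R' : Finset S,
      (∀ y : S, ∃! x, x ∈ R ∧ x ∈ MulAction.orbit Γ y) →
      (∀ y : S, ∃! x, x ∈ R' ∧ x ∈ MulAction.orbit Γ' y) →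
      ∑ x ∈ R, (1 : ℚ) / (Nat.card (MulAction.stabilizer Γ x) : ℚ) =
        (n : ℚ) * ∑ x ∈ R', (1 : ℚ) / (Nat.card (MulAction.stabilizer Γ' x) : ℚ)) := by
  classical
  subst hn
  have : Γ.FiniteIndex := ⟨hn0⟩
  refine ⟨Subgroup.finite_quotient_of_finite_quotient_of_index_ne_zero hn0, fun s ↦ ?_,
    fun R R' hR hR' ↦ ?_⟩
  · have := hstab s
    exact Finite.of_injective (fun γ : stabilizer Γ s ↦ (⟨γ, γ.2⟩ : stabilizer Γ' s))
      fun a b hab ↦ by ext; exact congrArg (fun z : stabilizer Γ' s ↦ (z : Γ')) hab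
  · simp_rw [one_div]
    rw [sum_eq_sum_sum_filter_mem_orbit R R' hR', Finset.mul_sum]
    refine Finset.sum_congr rfl fun s _ ↦ ?_
    have := hstab s
    rw [sum_filter_mem_orbit_inv_card_stabilizer Γ s R hR, div_eq_mul_inv]
end

section
/- Let Γ' be a countable group acting measurably on a measure space (α, μ) by measure-preserving transformations, and let Γ be a subgroup of Γ'. If t ⊆ α is a fundamental domain for the Γ-action with μ(t) < ∞, and s ⊆ α is a fundamental domain for the Γ'-action with μ(s) > 0, then Γ has finite index in Γ'. (This underlies the paper's discussion of overlattices: a lattice containing a lattice has finite index.) -/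
/-!
Covolumes multiply by the index: `μ t = [Γ' : Γ] * μ s`, with the index read in `ℕ∞`. Infinite
index together with `μ s > 0` would therefore force `μ t = ∞`.
-/

open MeasureTheory Pointwise

theorem Subgroup.bijective_out_mul {G : Type*} [Group G] (H : Subgroup G) :
    Function.Bijective fun p : (G ⧸ H) × H => p.1.out * p.2 := by
  constructor
  · rintro ⟨q₁, h₁⟩ ⟨q₂, h₂⟩ heq
    have hq : q₁ = q₂ := by
      simpa [QuotientGroup.mk_mul_of_mem] using congrArg (QuotientGroup.mk (s := H)) heq
    subst hq
    simpa using heq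
  · intro g
    obtain ⟨h, hh⟩ := QuotientGroup.mk_out_eq_mul H g
    exact ⟨(g, h⁻¹), by simp [hh]⟩

namespace MeasureTheory.IsFundamentalDomain

variable {G α : Type*} [Group G] [Countable G] [MulAction G α] [MeasurableSpace α]
  [MeasurableConstSMul G α] {μ : Measure α} [SMulInvariantMeasure G α μ] {s t : Set α}

/-- Writing `g = q * h` with `q` running through representatives of the left cosets of `H`, the
pieces `g • t ∩ s` with `q` fixed reassemble, after translating by `q⁻¹`, into `q⁻¹ • s`. -/
theorem measure_eq_card_quotient_mul {H : Subgroup G} (hs : IsFundamentalDomain G s μ)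
    (ht : IsFundamentalDomain H t μ) : μ t = ENat.card (G ⧸ H) * μ s := by
  have hcoset (q : G ⧸ H) : ∑' h : H, μ ((q.out * h) • t ∩ s) = μ s := by
    simp_rw [mul_smul, ← measure_inter_inv_smul μ q.out, Set.inter_comm _ (q.out⁻¹ • s)]
    exact ((measure_smul μ q.out⁻¹ s).symm.trans (ht.measure_eq_tsum' _)).symm
  calc μ t = ∑' g : G, μ (g • t ∩ s) := hs.measure_eq_tsum t
    _ = ∑' p : (G ⧸ H) × H, μ ((p.1.out * p.2) • t ∩ s) :=
      ((Equiv.ofBijective _ H.bijective_out_mul).tsum_eq fun g ↦ μ (g • t ∩ s)).symm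
    _ = ∑' _ : G ⧸ H, μ s := ENNReal.tsum_prod.trans (tsum_congr hcoset)
    _ = ENat.card (G ⧸ H) * μ s := ENNReal.tsum_const _

end MeasureTheory.IsFundamentalDomain

/-- Let `Γ'` be a countable group acting measurably on a measure space `(α, μ)`
by measure-preserving transformations, and let `Γ ≤ Γ'` be a subgroup.  If `t` is a fundamental
domain for the `Γ`-action with `μ(t) < ∞` and `s` is a fundamental domain for the `Γ'`-action
with `μ(s) > 0`, then `Γ` has finite index in `Γ'`. -/
theorem finite_index_of_finite_covolume
    {Γ' α : Type*} [Group Γ'] [Countable Γ'] [MulAction Γ' α]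
    [MeasurableSpace α] {μ : Measure α}
    (hmeas : ∀ γ : Γ', Measurable fun x : α => γ • x)
    [SMulInvariantMeasure Γ' α μ]
    (Γ : Subgroup Γ')
    {s t : Set α}
    (ht : IsFundamentalDomain Γ t μ) (hμt : μ t < ⊤)
    (hs : IsFundamentalDomain Γ' s μ) (hμs : 0 < μ s) :
    Γ.index ≠ 0 := by
  have : MeasurableConstSMul Γ' α := ⟨hmeas⟩
  intro hΓ
  have : Infinite (Γ' ⧸ Γ) := Subgroup.index_eq_zero_iff_infinite.mp hΓ
  have hcovol := hs.measure_eq_card_quotient_mul ht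
  rw [ENat.card_eq_top_of_infinite, ENat.toENNReal_top, ENNReal.top_mul hμs.ne'] at hcovol
  exact hμt.ne hcovol
end
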